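/- If B ⊆ ω^ω × ω^ω is a Gδ set (a countable intersection of open sets) and X × X ⊆ B for some uncountable X ⊆ ω^ω, then B contains a perfect square P × P with P ⊆ ω^ω a nonempty perfect set. -/

import Mathlib

/-!
The points of `X` that are condensation points of `X` form a set `Y ⊆ X` which is dense in itself,
and nonempty because all but countably many points of `X` lie in it (Baire space is second
countable). Write `B = ⋂ₙ Uₙ` with `Uₙ` open. A fusion argument chooses at stage `n` points of `Y`
indexed by the binary strings of length `n`, each in the cylinder of its parent and splitting
off a new point of `Y` there, together with a radius so large that the cylinders are pairwise
disjoint and any two of them have their product inside `Uₙ`; this is possible because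
`Y × Y ⊆ Uₙ` and only finitely many pairs are involved. Following the branches gives a continuous
injection of Cantor space whose range `P` is compact and perfect, with `P × P ⊆ ⋂ₙ Uₙ = B`.
-/

open Cardinal Set Filter Function PiNat Topology

namespace Sh522

section Condensation

variable {α : Type*} [TopologicalSpace α]

def condensationPoints (s : Set α) : Set α :=
  {x | ∀ u ∈ 𝓝 x, ¬(s ∩ u).Countable}

variable [SecondCountableTopology α]

theorem countable_diff_condensationPoints (s : Set α) :
    (s \ condensationPoints s).Countable := by
  have hloc : ∀ x ∈ s \ condensationPoints s, ∃ u ∈ 𝓝 x, (s ∩ u).Countable := by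
    rintro x ⟨-, hx⟩
    simpa [condensationPoints] using hx
  choose! u hu hsu using hloc
  obtain ⟨c, hcs, hc, hcover⟩ :=
    TopologicalSpace.countable_cover_nhdsWithin fun x hx => mem_nhdsWithin_of_mem_nhds (hu x hx)
  refine (hc.biUnion fun x hx => hsu x (hcs hx)).mono fun y hy => ?_
  obtain ⟨x, hx, hyx⟩ := mem_iUnion₂.1 (hcover hy)
  exact mem_iUnion₂.2 ⟨x, hx, hy.1, hyx⟩

theorem not_countable_inter_condensationPoints_inter {s u : Set α} (hsu : ¬(s ∩ u).Countable) :
    ¬(s ∩ condensationPoints s ∩ u).Countable := fun h =>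
  hsu <| (h.union (countable_diff_condensationPoints s)).mono fun x ⟨hxs, hxu⟩ => by
    by_cases hx : x ∈ condensationPoints s
    · exact Or.inl ⟨⟨hxs, hx⟩, hxu⟩
    · exact Or.inr ⟨hxs, hx⟩

theorem preperfect_inter_condensationPoints (s : Set α) :
    Preperfect (s ∩ condensationPoints s) := by
  refine preperfect_iff_nhds.2 fun x hx u hu => ?_
  by_contra! h
  exact not_countable_inter_condensationPoints_inter (hx.2 u hu)
    ((countable_singleton x).mono fun y hy => h y ⟨hy.2, hy.1⟩)

theorem exists_preperfect_nonempty_subset_of_not_countable {s : Set α} (hs : ¬s.Countable) :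
    ∃ t ⊆ s, Preperfect t ∧ t.Nonempty := by
  refine ⟨_, inter_subset_left, preperfect_inter_condensationPoints s, ?_⟩
  have := not_countable_inter_condensationPoints_inter (u := univ) (by rwa [inter_univ])
  rw [inter_univ] at this
  exact nonempty_iff_ne_empty.2 fun h => this (h ▸ countable_empty)

end Condensation

section Cylinders

variable {E : ℕ → Type*}

theorem mem_cylinder_trans {x y z : ∀ n, E n} {k : ℕ} (hy : y ∈ cylinder x k)
    (hz : z ∈ cylinder y k) : z ∈ cylinder x k :=
  mem_cylinder_iff_eq.1 hy ▸ hz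

theorem mem_cylinder_of_common_mem {x y z : ∀ n, E n} {k : ℕ} (hx : z ∈ cylinder x k)
    (hy : z ∈ cylinder y k) : y ∈ cylinder x k :=
  mem_cylinder_trans hx ((mem_cylinder_comm y z k).1 hy)

theorem eventually_notMem_cylinder {x y : ∀ n, E n} (h : x ≠ y) :
    ∀ᶠ k in atTop, y ∉ cylinder x k :=
  (eventually_gt_atTop (firstDiff y x)).mono fun k hk hy =>
    hk.not_ge ((mem_cylinder_iff_le_firstDiff h.symm k).1 hy)

theorem mem_cylinder_of_le {x : ℕ → ∀ n, E n} {k : ℕ → ℕ} (hk : Monotone k)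
    (hx : ∀ n, x (n + 1) ∈ cylinder (x n) (k n)) {m n : ℕ} (hmn : m ≤ n) :
    x n ∈ cylinder (x m) (k m) := by
  induction n, hmn using Nat.le_induction with
  | base => exact self_mem_cylinder _ _
  | succ n hmn ih => exact mem_cylinder_trans ih (cylinder_anti _ (hk hmn) (hx n))

theorem diag_mem_cylinder {x : ℕ → ∀ n, E n} {k : ℕ → ℕ} (hk : StrictMono k)
    (hx : ∀ n, x (n + 1) ∈ cylinder (x n) (k n)) (n : ℕ) :
    (fun i => x (i + 1) i) ∈ cylinder (x n) (k n) := by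
  refine mem_cylinder_iff.2 fun i hi => ?_
  rcases le_total n (i + 1) with h | h
  · exact mem_cylinder_iff.1 (mem_cylinder_of_le hk.monotone hx h) i hi
  · exact (mem_cylinder_iff.1 (mem_cylinder_of_le hk.monotone hx h) i
      ((Nat.lt_succ_self i).trans_le hk.le_apply)).symm

variable [∀ n, TopologicalSpace (E n)] [∀ n, DiscreteTopology (E n)]

theorem hasBasis_nhds_cylinder (x : ∀ n, E n) : (𝓝 x).HasBasis (fun _ => True) (cylinder x) :=
  ⟨fun t => ⟨fun ht => by
      obtain ⟨_, ⟨y, n, rfl⟩, hxy, hyt⟩ := (isTopologicalBasis_cylinders E).mem_nhds_iff.1 ht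
      exact ⟨n, trivial, mem_cylinder_iff_eq.1 hxy ▸ hyt⟩,
    fun ⟨n, _, hn⟩ =>
      mem_of_superset ((isOpen_cylinder E x n).mem_nhds (self_mem_cylinder x n)) hn⟩⟩

theorem eventually_cylinder_prod_subset {x y : ∀ n, E n} {U : Set ((∀ n, E n) × ∀ n, E n)}
    (hU : U ∈ 𝓝 (x, y)) : ∀ᶠ k in atTop, cylinder x k ×ˢ cylinder y k ⊆ U := by
  rw [nhds_prod_eq] at hU
  obtain ⟨k, -, hk⟩ := ((hasBasis_nhds_cylinder x).prod_same_index_anti (hasBasis_nhds_cylinder y)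
    (fun _ _ _ _ h => cylinder_anti x h) (fun _ _ _ _ h => cylinder_anti y h)).mem_iff.1 hU
  exact eventually_atTop.2
    ⟨k, fun m hm => (prod_mono (cylinder_anti x hm) (cylinder_anti y hm)).trans hk⟩

instance [∀ n, Nontrivial (E n)] : PerfectSpace (∀ n, E n) :=
  ⟨preperfect_iff_nhds.2 fun x _ u hu => by
    obtain ⟨n, -, hn⟩ := (hasBasis_nhds_cylinder x).mem_iff.1 hu
    obtain ⟨e, he⟩ := exists_ne (x n)
    exact ⟨update x n e, ⟨hn (update_mem_cylinder x n e), mem_univ _⟩,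
      fun h => he (by simpa using congrFun h n)⟩⟩

end Cylinders

theorem _root_.Continuous.preperfect_range {β α : Type*} [TopologicalSpace β] [PerfectSpace β]
    [TopologicalSpace α] {f : β → α} (hf : Continuous f) (hinj : Injective f) :
    Preperfect (range f) := by
  refine preperfect_iff_nhds.2 ?_
  rintro _ ⟨a, rfl⟩ u hu
  obtain ⟨b, ⟨hbu, -⟩, hba⟩ := preperfect_iff_nhds.1 PerfectSpace.univ_preperfect a (mem_univ a) _
    (hf.continuousAt.preimage_mem_nhds hu)
  exact ⟨f b, ⟨hbu, mem_range_self b⟩, hinj.ne hba⟩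

structure SquareApprox {E : ℕ → Type*} (Y : Set (∀ n, E n)) (U : Set ((∀ n, E n) × ∀ n, E n))
    (n : ℕ) where
  point : (Fin n → Bool) → ∀ i, E i
  radius : ℕ
  point_mem : ∀ s, point s ∈ Y
  notMem_cylinder : Pairwise fun s t => point t ∉ cylinder (point s) radius
  prod_subset : ∀ s t, cylinder (point s) radius ×ˢ cylinder (point t) radius ⊆ U

namespace SquareApprox

variable {E : ℕ → Type*} [∀ n, TopologicalSpace (E n)] [∀ n, DiscreteTopology (E n)]
  {Y : Set (∀ n, E n)} {U U' : Set ((∀ n, E n) × ∀ n, E n)} {n : ℕ}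

theorem exists_of_injective (hU : IsOpen U) (hYU : Y ×ˢ Y ⊆ U) {y : (Fin n → Bool) → ∀ i, E i}
    (hy : Injective y) (hyY : ∀ s, y s ∈ Y) (m : ℕ) :
    ∃ S : SquareApprox Y U n, S.point = y ∧ m < S.radius := by
  have hsep : ∀ᶠ k in atTop, ∀ s t, s ≠ t → y t ∉ cylinder (y s) k :=
    eventually_all.2 fun s => eventually_all.2 fun t => by
      by_cases hst : s = t
      · exact Eventually.of_forall fun _ h => (h hst).elim
      · exact (eventually_notMem_cylinder (hy.ne hst)).mono fun _ h _ => h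
  have hprod : ∀ᶠ k in atTop, ∀ s t, cylinder (y s) k ×ˢ cylinder (y t) k ⊆ U :=
    eventually_all.2 fun s => eventually_all.2 fun t =>
      eventually_cylinder_prod_subset (hU.mem_nhds (hYU ⟨hyY s, hyY t⟩))
  obtain ⟨k, hmk, hk, hkU⟩ := ((eventually_gt_atTop m).and (hsep.and hprod)).exists
  exact ⟨⟨y, k, hyY, hk, hkU⟩, rfl, hmk⟩

theorem exists_split (hY : Preperfect Y) (S : SquareApprox Y U n) :
    ∃ y : (Fin (n + 1) → Bool) → ∀ i, E i, Injective y ∧ (∀ s, y s ∈ Y) ∧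
      ∀ s, y s ∈ cylinder (S.point (Fin.init s)) S.radius := by
  choose z hz hzne using fun s => preperfect_iff_nhds.1 hY (S.point s) (S.point_mem s) _
    ((hasBasis_nhds_cylinder _).mem_of_mem (i := S.radius) trivial)
  let y (s : Fin (n + 1) → Bool) := bif s (Fin.last n) then z (Fin.init s) else S.point (Fin.init s)
  have hy : ∀ s, y s ∈ cylinder (S.point (Fin.init s)) S.radius ∩ Y := fun s => by
    cases h : s (Fin.last n) <;> simp only [y, h, cond_true, cond_false]
    · exact ⟨self_mem_cylinder _ _, S.point_mem _⟩
    · exact hz _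
  refine ⟨y, fun s t hst => ?_, fun s => (hy s).2, fun s => (hy s).1⟩
  by_cases hinit : Fin.init s = Fin.init t
  · rw [← Fin.snoc_init_self s, ← Fin.snoc_init_self t, hinit]
    congr 1
    cases hs : s (Fin.last n) <;> cases ht : t (Fin.last n) <;>
      simp only [y, hs, ht, hinit, cond_true, cond_false] at hst
    exacts [rfl, (hzne _ hst.symm).elim, (hzne _ hst).elim, rfl]
  · exact (S.notMem_cylinder hinit (mem_cylinder_of_common_mem (hy s).1 (hst ▸ (hy t).1))).elim

theorem exists_refinement (hY : Preperfect Y) (hU' : IsOpen U') (hYU' : Y ×ˢ Y ⊆ U')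
    (S : SquareApprox Y U n) : ∃ S' : SquareApprox Y U' (n + 1), S.radius < S'.radius ∧
      ∀ s, S'.point s ∈ cylinder (S.point (Fin.init s)) S.radius := by
  obtain ⟨y, hy, hyY, hycyl⟩ := S.exists_split hY
  obtain ⟨S', rfl, hr⟩ := exists_of_injective hU' hYU' hy hyY S.radius
  exact ⟨S', hr, hycyl⟩

end SquareApprox

theorem exists_continuous_injective_forall_prod_range_subset {E : ℕ → Type*}
    [∀ n, TopologicalSpace (E n)] [∀ n, DiscreteTopology (E n)] {Y : Set (∀ n, E n)}
    (hY : Preperfect Y) (hne : Y.Nonempty) {U : ℕ → Set ((∀ n, E n) × ∀ n, E n)}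
    (hU : ∀ n, IsOpen (U n)) (hYU : ∀ n, Y ×ˢ Y ⊆ U n) :
    ∃ f : (ℕ → Bool) → ∀ n, E n, Continuous f ∧ Injective f ∧ ∀ n, range f ×ˢ range f ⊆ U n := by
  obtain ⟨y₀, hy₀⟩ := hne
  obtain ⟨S₀, -, -⟩ := SquareApprox.exists_of_injective (hU 0) (hYU 0)
    (injective_of_subsingleton fun _ : Fin 0 → Bool => y₀) (fun _ => hy₀) 0
  choose next hnext_radius hnext_point using fun n (S : SquareApprox Y (U n) n) =>
    S.exists_refinement hY (hU (n + 1)) (hYU (n + 1))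
  let T : ∀ n, SquareApprox Y (U n) n := fun n => Nat.rec S₀ next n
  let x : (ℕ → Bool) → ℕ → ∀ n, E n := fun a n => (T n).point fun i => a i
  have hk : StrictMono fun n => (T n).radius :=
    strictMono_nat_of_lt_succ fun n => hnext_radius n (T n)
  let f : (ℕ → Bool) → ∀ n, E n := fun a i => x a (i + 1) i
  have hf : ∀ a n, f a ∈ cylinder (x a n) (T n).radius := fun a =>
    diag_mem_cylinder hk fun n => hnext_point n (T n) _
  refine ⟨f, continuous_pi fun i => ?_, fun a b hab => ?_, ?_⟩
  · exact (continuous_of_discreteTopology (f := fun s => (T (i + 1)).point s i)).comp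
      (continuous_pi fun j => continuous_apply (j : ℕ))
  · by_contra hne
    obtain ⟨i, hi⟩ := Function.ne_iff.1 hne
    have hres : (fun j : Fin (i + 1) => a j) ≠ fun j : Fin (i + 1) => b j :=
      fun h => hi (congrFun h (Fin.last i))
    exact (T (i + 1)).notMem_cylinder hres
      (mem_cylinder_of_common_mem (hf a (i + 1)) (hab ▸ hf b (i + 1)))
  · rintro n ⟨_, _⟩ ⟨⟨a, rfl⟩, ⟨b, rfl⟩⟩
    exact (T n).prod_subset _ _ ⟨hf a n, hf b n⟩

/-- a Gδ subset of Baire space squared containing an uncountable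
square contains a perfect square. -/
theorem stmt_11 (B : Set ((ℕ → ℕ) × (ℕ → ℕ))) (hB : IsGδ B)
    (X : Set (ℕ → ℕ)) (hX : ℵ₀ < Cardinal.mk X) (hXB : X ×ˢ X ⊆ B) :
    ∃ P : Set (ℕ → ℕ), Perfect P ∧ P.Nonempty ∧ P ×ˢ P ⊆ B := by
  obtain ⟨U, hU, rfl⟩ := hB.eq_iInter_nat
  obtain ⟨Y, hYX, hY, hYne⟩ := exists_preperfect_nonempty_subset_of_not_countable
    fun h => hX.not_ge (le_aleph0_iff_set_countable.2 h)
  obtain ⟨f, hf, hinj, hfU⟩ := exists_continuous_injective_forall_prod_range_subset hY hYne hU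
    fun n => (prod_mono hYX hYX).trans (hXB.trans (iInter_subset _ n))
  exact ⟨range f, ⟨(isCompact_range hf).isClosed, hf.preperfect_range hinj⟩, range_nonempty f,
    subset_iInter hfU⟩

end Sh522
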